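/- arXiv:1902.03396 — 7 statements merged into one kernel-verified Lean document; each statement's English description precedes it below -/
import Mathlib

section
/- Let A and B be R-algebras. If every commuting map on A is proper and every commuting map on B is proper, then every commuting map on the direct product algebra A × B is proper. -/
/-- A commuting map on an `R`-algebra `C`. -/
def IsCommutingMap {R C : Type*} [CommRing R] [Ring C] [Algebra R C] (θ : C →ₗ[R] C) : Prop :=
  ∀ x : C, θ x * x = x * θ x

/-- `θ` is proper: `θ(x) = λ*x + μ(x)` with `λ` central and `μ` `R`-linear central-valued. -/
def ProperCommMap {R C : Type*} [CommRing R] [Ring C] [Algebra R C] (θ : C →ₗ[R] C) : Prop :=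
  ∃ l ∈ Set.center C, ∃ μ : C →ₗ[R] C, (∀ x, μ x ∈ Set.center C) ∧ ∀ x, θ x = l * x + μ x

/-!
A commuting map `θ` of `A × B` has the matrix form `θ (a, b) = (θ₁₁ a + θ₁₂ b, θ₂₁ a + θ₂₂ b)`.
The diagonal corners `θ₁₁`, `θ₂₂` are commuting maps of `A` and `B`, hence of the form
`x ↦ λ x + μ x`, while the linearized identity `θ x * y + θ y * x = x * θ y + y * θ x`, applied to
`x = (0, b)` and `y = (a, 0)`, shows that the off-diagonal corners take central values. So
`λ = (λ₁, λ₂)` works for `θ`, the off-diagonal corners being absorbed into the central part.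
-/

section Proper

variable {R C : Type*} [CommRing R] [Ring C] [Algebra R C]

theorem properCommMap_iff {θ : C →ₗ[R] C} :
    ProperCommMap θ ↔ ∃ l ∈ Set.center C, ∀ x, θ x - l * x ∈ Set.center C := by
  constructor
  · rintro ⟨l, hl, μ, hμ, hθ⟩
    exact ⟨l, hl, fun x => by rw [hθ x, add_sub_cancel_left]; exact hμ x⟩
  · rintro ⟨l, hl, hθ⟩
    exact ⟨l, hl, θ - LinearMap.mulLeft R l, hθ, fun x => by simp⟩

theorem IsCommutingMap.linearize {θ : C →ₗ[R] C} (hθ : IsCommutingMap θ) (x y : C) :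
    θ x * y + θ y * x = x * θ y + y * θ x :=
  calc θ x * y + θ y * x = θ (x + y) * (x + y) - θ x * x - θ y * y := by
        simp only [map_add, add_mul, mul_add]; abel
    _ = (x + y) * θ (x + y) - x * θ x - y * θ y := by rw [hθ, hθ, hθ]
    _ = x * θ y + y * θ x := by simp only [map_add, add_mul, mul_add]; abel

end Proper

namespace IsCommutingMap

variable {R A B : Type*} [CommRing R] [Ring A] [Ring B] [Algebra R A] [Algebra R B]
  {θ : A × B →ₗ[R] A × B}

theorem fst_comp_inl (hθ : IsCommutingMap θ) :
    IsCommutingMap (LinearMap.fst R A B ∘ₗ θ ∘ₗ LinearMap.inl R A B) :=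
  fun a => by simpa using congrArg Prod.fst (hθ (a, 0))

theorem snd_comp_inr (hθ : IsCommutingMap θ) :
    IsCommutingMap (LinearMap.snd R A B ∘ₗ θ ∘ₗ LinearMap.inr R A B) :=
  fun b => by simpa using congrArg Prod.snd (hθ (0, b))

theorem fst_apply_inr_mem_center (hθ : IsCommutingMap θ) (b : B) :
    (θ (0, b)).1 ∈ Set.center A :=
  Semigroup.mem_center_iff.2 fun a => by
    simpa using (congrArg Prod.fst (hθ.linearize (0, b) (a, 0))).symm

theorem snd_apply_inl_mem_center (hθ : IsCommutingMap θ) (a : A) :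
    (θ (a, 0)).2 ∈ Set.center B :=
  Semigroup.mem_center_iff.2 fun b => by
    simpa using (congrArg Prod.snd (hθ.linearize (a, 0) (0, b))).symm

theorem fst_apply_sub_mul_mem_center (hθ : IsCommutingMap θ) {l : A}
    (hl : ∀ a, (θ (a, 0)).1 - l * a ∈ Set.center A) (a : A) (b : B) :
    (θ (a, b)).1 - l * a ∈ Set.center A := by
  have hsplit : θ (a, b) = θ (a, 0) + θ (0, b) := by simp [← map_add]
  rw [hsplit, Prod.fst_add, add_sub_right_comm]
  exact Set.add_mem_center (hl a) (hθ.fst_apply_inr_mem_center b)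

theorem snd_apply_sub_mul_mem_center (hθ : IsCommutingMap θ) {l : B}
    (hl : ∀ b, (θ (0, b)).2 - l * b ∈ Set.center B) (a : A) (b : B) :
    (θ (a, b)).2 - l * b ∈ Set.center B := by
  have hsplit : θ (a, b) = θ (a, 0) + θ (0, b) := by simp [← map_add]
  rw [hsplit, Prod.snd_add, add_sub_assoc]
  exact Set.add_mem_center (hθ.snd_apply_inl_mem_center a) (hl b)

end IsCommutingMap

/-- if every commuting map on `A` and on `B` is proper, then every commuting
map on `A × B` is proper. -/
theorem prod_commuting_proper {R A B : Type*} [CommRing R] [Ring A] [Ring B]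
    [Algebra R A] [Algebra R B]
    (hA : ∀ θ : A →ₗ[R] A, IsCommutingMap θ → ProperCommMap θ)
    (hB : ∀ θ : B →ₗ[R] B, IsCommutingMap θ → ProperCommMap θ) :
    ∀ θ : A × B →ₗ[R] A × B, IsCommutingMap θ → ProperCommMap θ := by
  intro θ hθ
  obtain ⟨lA, hlA, hθA⟩ := properCommMap_iff.1 (hA _ hθ.fst_comp_inl)
  obtain ⟨lB, hlB, hθB⟩ := properCommMap_iff.1 (hB _ hθ.snd_comp_inr)
  refine properCommMap_iff.2 ⟨(lA, lB), ?_, fun x => ?_⟩ <;> rw [Set.center_prod]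
  · exact ⟨hlA, hlB⟩
  · exact ⟨hθ.fst_apply_sub_mul_mem_center hθA x.1 x.2,
      hθ.snd_apply_sub_mul_mem_center hθB x.1 x.2⟩
end

section
/- Let A and B be R-algebras with unity. If the direct product algebra A × B admits no improper commuting map, then A admits no improper commuting map. -/
section

variable {R A B : Type*} [CommRing R] [Ring A] [Ring B] [Algebra R A] [Algebra R B]

theorem IsCommutingMap.inl_comp_comp_fst {θ : A →ₗ[R] A} (hθ : IsCommutingMap θ) :
    IsCommutingMap (LinearMap.inl R A B ∘ₗ θ ∘ₗ LinearMap.fst R A B) := fun x =>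
  Prod.ext (hθ x.1) (by simp)

theorem ProperCommMap.fst_comp_comp_inl {Θ : A × B →ₗ[R] A × B} (hΘ : ProperCommMap Θ) :
    ProperCommMap (LinearMap.fst R A B ∘ₗ Θ ∘ₗ LinearMap.inl R A B) := by
  obtain ⟨l, hl, μ, hμ, hΘμ⟩ := hΘ
  refine ⟨l.1, (Set.center_prod.subset hl).1, LinearMap.fst R A B ∘ₗ μ ∘ₗ LinearMap.inl R A B,
    fun x => (Set.center_prod.subset (hμ (x, 0))).1, fun x => ?_⟩
  simp [hΘμ]

end

/-- if `A × B` admits no improper commuting map, then neither does `A`. -/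
theorem factor_commuting_proper {R A B : Type*} [CommRing R] [Ring A] [Ring B]
    [Algebra R A] [Algebra R B]
    (hAB : ∀ θ : A × B →ₗ[R] A × B, IsCommutingMap θ → ProperCommMap θ) :
    ∀ θ : A →ₗ[R] A, IsCommutingMap θ → ProperCommMap θ := fun _ hθ =>
  (hAB _ (hθ.inl_comp_comp_fst (B := B))).fst_comp_comp_inl
end

section
/- Let R be a 2-torsion free commutative ring with unity and n ≥ 1. Every commuting map θ on the full matrix algebra Mₙ(R) is proper: there exist λ in the center of Mₙ(R) and an R-linear map μ : Mₙ(R) → Z(Mₙ(R)) such that θ(x) = λ*x + μ(x) for all x. -/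
/-!
Linearizing `θ x * x = x * θ x` gives `⁅θ x, y⁆ = ⁅x, θ y⁆`. Reading this identity entrywise at
matrix units `x = E_pq`, `y = E_kl` shows that the entries `θ(E_pq)_pq` with `p ≠ q` all equal one
scalar `c`, and that `μ = θ - c • id`, which satisfies the same identity, sends every matrix unit to
a scalar matrix. Two-torsion freeness is needed for the diagonal of `θ(E_kl)`, `k ≠ l`: the
identity only yields `2 (θ(E_kl)_kk - θ(E_kl)_ll) = 0`.
-/

open Matrix

theorem AddMonoidHom.lie_map_eq_lie_of_commute {A : Type*} [NonUnitalNonAssocRing A] (θ : A →+ A)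
    (hθ : ∀ x, θ x * x = x * θ x) (x y : A) : ⁅θ x, y⁆ = ⁅x, θ y⁆ := by
  have h := hθ (x + y)
  simp only [map_add, add_mul, mul_add, hθ x, hθ y] at h
  rw [Ring.lie_def, Ring.lie_def]
  linear_combination (norm := noncomm_ring) h

theorem LinearMap.lie_sub_smul_id {R A : Type*} [CommRing R] [Ring A] [Algebra R A]
    (θ : A →ₗ[R] A) (hθ : ∀ x y, ⁅θ x, y⁆ = ⁅x, θ y⁆) (c : R) (x y : A) :
    ⁅(θ - c • id : A →ₗ[R] A) x, y⁆ = ⁅x, (θ - c • id : A →ₗ[R] A) y⁆ := by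
  have h := hθ x y
  simp only [sub_apply, smul_apply, id_apply, Ring.lie_def, sub_mul, mul_sub, smul_mul_assoc,
    mul_smul_comm] at h ⊢
  rw [sub_sub_sub_comm, h]
  abel

theorem Matrix.lie_single_one_apply {R ι : Type*} [Ring R] [Fintype ι] [DecidableEq ι]
    (M : Matrix ι ι R) (k l i j : ι) :
    ⁅M, single k l 1⁆ i j = (if j = l then M i k else 0) - (if i = k then M l j else 0) := by
  rw [Ring.lie_def, sub_apply]
  congr 1
  · split_ifs with h
    · subst h; simp
    · exact mul_single_apply_of_ne _ _ _ _ _ h M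
  · split_ifs with h
    · subst h; simp
    · exact single_mul_apply_of_ne _ _ _ _ _ h M

theorem Matrix.single_one_lie_apply {R ι : Type*} [Ring R] [Fintype ι] [DecidableEq ι]
    (M : Matrix ι ι R) (k l i j : ι) :
    ⁅single k l (1 : R), M⁆ i j = (if i = k then M l j else 0) - (if j = l then M i k else 0) := by
  rw [Ring.lie_def, ← neg_sub, ← Ring.lie_def, neg_apply, lie_single_one_apply, neg_sub]

namespace Matrix

variable {R ι : Type*} [CommRing R] [Fintype ι] [DecidableEq ι] {θ : Matrix ι ι R → Matrix ι ι R}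

theorem lie_map_single_apply (hθ : ∀ x y, ⁅θ x, y⁆ = ⁅x, θ y⁆) (p q k l i j : ι) :
    (if j = l then θ (single p q 1) i k else 0) - (if i = k then θ (single p q 1) l j else 0) =
      (if i = p then θ (single k l 1) q j else 0) - (if j = q then θ (single k l 1) i p else 0) := by
  have h := congr_fun₂ (hθ (single p q 1) (single k l 1)) i j
  rwa [lie_single_one_apply, single_one_lie_apply] at h

theorem map_single_apply_eq_zero (hθ : ∀ x y, ⁅θ x, y⁆ = ⁅x, θ y⁆) {k l a b : ι} (hab : a ≠ b)
    (hkl : ¬(a = k ∧ b = l)) : θ (single k l 1) a b = 0 := by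
  by_cases hbl : b = l
  · have hak : a ≠ k := fun h => hkl ⟨h, hbl⟩
    have h := lie_map_single_apply hθ b a k l a a
    simp only [if_neg (hbl ▸ hab : a ≠ l), if_neg hak, if_neg hab, if_true] at h
    linear_combination h
  · have : Nontrivial ι := ⟨⟨a, b, hab⟩⟩
    obtain ⟨i, hik⟩ := exists_ne k
    have h := lie_map_single_apply hθ i a k l i b
    simp only [if_neg hbl, if_neg hik, if_neg hab.symm, if_true] at h
    linear_combination -h

theorem map_single_apply_eq_map_single_apply (hθ : ∀ x y, ⁅θ x, y⁆ = ⁅x, θ y⁆) {p q l : ι}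
    (hpq : p ≠ q) (hlq : l ≠ q) : θ (single p q 1) p q = θ (single q l 1) q l := by
  have h := lie_map_single_apply hθ p q q l p l
  simp only [if_neg hpq, if_neg hlq, if_true] at h
  linear_combination h

theorem exists_map_single_apply_eq_of_ne (hθ : ∀ x y, ⁅θ x, y⁆ = ⁅x, θ y⁆) :
    ∃ c : R, ∀ p q, p ≠ q → θ (single p q 1) p q = c := by
  by_cases hι : Nontrivial ι
  swap
  · exact ⟨0, fun p q hpq => (hι ⟨⟨p, q, hpq⟩⟩).elim⟩
  obtain ⟨r, s, hrs⟩ := hι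
  refine ⟨θ (single r s 1) r s, fun p q hpq => ?_⟩
  by_cases hrq : r = q
  · subst hrq
    exact map_single_apply_eq_map_single_apply hθ hpq hrs.symm
  · calc θ (single p q 1) p q = θ (single q r 1) q r :=
          map_single_apply_eq_map_single_apply hθ hpq hrq
      _ = θ (single r s 1) r s := map_single_apply_eq_map_single_apply hθ (Ne.symm hrq) hrs.symm

theorem map_single_apply_diag_eq_of_ne (htf : ∀ a : R, a + a = 0 → a = 0)
    (hθ : ∀ x y, ⁅θ x, y⁆ = ⁅x, θ y⁆) {k l : ι} (hkl : k ≠ l) (m : ι) :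
    θ (single k l 1) m m = θ (single k l 1) l l := by
  by_cases hmk : m = k
  · subst hmk
    have h := lie_map_single_apply hθ m l m l m l
    simp only [if_true] at h
    have h2 := htf (θ (single m l 1) m m - θ (single m l 1) l l) (by linear_combination h)
    linear_combination h2
  · have h := lie_map_single_apply hθ m l k l m l
    simp only [if_true, if_neg hmk] at h
    linear_combination h - map_single_apply_eq_zero hθ hmk (fun h => hkl h.2)

theorem map_single_self_apply_diag (hθ : ∀ x y, ⁅θ x, y⁆ = ⁅x, θ y⁆) {k p : ι} (hpk : p ≠ k) :
    θ (single k k 1) p p = θ (single k k 1) k k - θ (single p k 1) p k := by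
  have h := lie_map_single_apply hθ p k k k p k
  simp only [if_true, if_neg hpk] at h
  linear_combination h

theorem map_single_eq_smul_one (htf : ∀ a : R, a + a = 0 → a = 0)
    (hθ : ∀ x y, ⁅θ x, y⁆ = ⁅x, θ y⁆) (h0 : ∀ p q, p ≠ q → θ (single p q 1) p q = 0) (k l : ι) :
    θ (single k l 1) = θ (single k l 1) l l • (1 : Matrix ι ι R) := by
  ext a b
  rw [smul_apply, one_apply, smul_eq_mul]
  by_cases hab : a = b
  · subst hab
    rw [if_pos rfl, mul_one]
    by_cases hkl : k = l
    · subst hkl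
      by_cases hak : a = k
      · rw [hak]
      · rw [map_single_self_apply_diag hθ hak, h0 a k hak, sub_zero]
    · exact map_single_apply_diag_eq_of_ne htf hθ hkl a
  · rw [if_neg hab, mul_zero]
    by_cases h : a = k ∧ b = l
    · obtain ⟨rfl, rfl⟩ := h
      exact h0 a b hab
    · exact map_single_apply_eq_zero hθ hab h

end Matrix

theorem LinearMap.map_mem_center_of_map_single_mem {R ι : Type*} [CommSemiring R] [Fintype ι]
    [DecidableEq ι] (μ : Matrix ι ι R →ₗ[R] Matrix ι ι R)
    (h : ∀ k l, μ (Matrix.single k l 1) ∈ Set.center (Matrix ι ι R)) (x : Matrix ι ι R) :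
    μ x ∈ Set.center (Matrix ι ι R) := by
  change μ x ∈ Subalgebra.center R (Matrix ι ι R)
  induction x using Matrix.induction_on' with
  | h_zero => simp [zero_mem]
  | h_add p q hp hq => simpa using add_mem hp hq
  | h_std_basis k l a =>
    rw [← mul_one a, ← smul_eq_mul, ← Matrix.smul_single, map_smul]
    exact Subalgebra.smul_mem _ (h k l) a

theorem matrix_commuting_proper_general {R : Type*} [CommRing R]
    (htf : ∀ a : R, a + a = 0 → a = 0) (n : ℕ)
    (θ : Matrix (Fin n) (Fin n) R →ₗ[R] Matrix (Fin n) (Fin n) R)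
    (hθ : ∀ x, θ x * x = x * θ x) :
    ∃ l ∈ Set.center (Matrix (Fin n) (Fin n) R),
      ∃ μ : Matrix (Fin n) (Fin n) R →ₗ[R] Matrix (Fin n) (Fin n) R,
        (∀ x, μ x ∈ Set.center (Matrix (Fin n) (Fin n) R)) ∧ ∀ x, θ x = l * x + μ x := by
  have hθ' : ∀ x y, ⁅θ x, y⁆ = ⁅x, θ y⁆ := θ.toAddMonoidHom.lie_map_eq_lie_of_commute hθ
  obtain ⟨c, hc⟩ := exists_map_single_apply_eq_of_ne hθ'
  set μ := θ - c • LinearMap.id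
  have hμ_apply (x) : μ x = θ x - c • x := rfl
  have hμ0 (p q : Fin n) (hpq : p ≠ q) : μ (single p q 1) p q = 0 := by
    simp [hμ_apply, hc p q hpq]
  have smul_one_mem_center (a : R) : a • (1 : Matrix (Fin n) (Fin n) R) ∈ Set.center _ := by
    rw [← Algebra.algebraMap_eq_smul_one]
    exact Set.algebraMap_mem_center a
  refine ⟨c • 1, smul_one_mem_center c, μ,
    μ.map_mem_center_of_map_single_mem fun k l => ?_, fun x => ?_⟩
  · rw [map_single_eq_smul_one htf (θ.lie_sub_smul_id hθ' c) hμ0]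
    exact smul_one_mem_center _
  · rw [hμ_apply, smul_one_mul]
    abel

/-- every commuting map on the full matrix algebra `Mₙ(R)`,
`R` a `2`-torsion free commutative ring with unity and `n ≥ 1`, is proper. -/
theorem matrix_commuting_proper {R : Type*} [CommRing R]
    (htf : ∀ a : R, a + a = 0 → a = 0) (n : ℕ) (hn : 1 ≤ n)
    (θ : Matrix (Fin n) (Fin n) R →ₗ[R] Matrix (Fin n) (Fin n) R)
    (hθ : ∀ x, θ x * x = x * θ x) :
    ∃ l ∈ Set.center (Matrix (Fin n) (Fin n) R),
      ∃ μ : Matrix (Fin n) (Fin n) R →ₗ[R] Matrix (Fin n) (Fin n) R,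
        (∀ x, μ x ∈ Set.center (Matrix (Fin n) (Fin n) R)) ∧ ∀ x, θ x = l * x + μ x :=
  matrix_commuting_proper_general htf n θ hθ
end

section
/- Let R be a 2-torsion free commutative ring with unity and n ≥ 1. Every commuting map θ on the algebra Tₙ(R) of upper triangular n×n matrices over R is proper: there exist a central element λ of Tₙ(R) and an R-linear map μ : Tₙ(R) → Z(Tₙ(R)) such that θ(x) = λ*x + μ(x) for all x. -/
/-!
Write `A i j` for the image under `θ` of the matrix unit `E i j`, `i ≤ j`. Reading the
linearized identity `θ x * y + θ y * x = x * θ y + y * θ x` entrywise at pairs of matrix units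
shows that `A i j` is diagonal apart from its `(i, j)` entry, that the `(i, j)` entry of `A i j`
(`i < j`) equals both `(A i i) i i - (A i i) j j` and `(A j j) j j - (A j j) i i`, and that
`(A k k) p p` does not depend on `p ≠ k`. Hence `(A k k) k k - (A k k) p p` is a constant `λ`,
and `θ (E i j) - λ • E i j` is scalar for every unit; by linearity `θ - λ • id` takes values in
the centre.
-/

/-- The algebra `Tₙ(R)` of upper triangular `n × n` matrices over `R`. -/
def TriAlg (n : ℕ) (R : Type*) [CommRing R] : Subalgebra R (Matrix (Fin n) (Fin n) R) where
  carrier := {a | ∀ i j : Fin n, j < i → a i j = 0}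
  mul_mem' := by
    intro a b ha hb i j hij
    rw [Matrix.mul_apply]
    refine Finset.sum_eq_zero fun k _ => ?_
    rcases lt_or_ge k i with hk | hk
    · rw [ha i k hk, zero_mul]
    · rw [hb k j (lt_of_lt_of_le hij hk), mul_zero]
  add_mem' := by
    intro a b ha hb i j hij
    simp [Matrix.add_apply, ha i j hij, hb i j hij]
  algebraMap_mem' := by
    intro r i j hij
    rw [Matrix.algebraMap_eq_diagonal]
    exact Matrix.diagonal_apply_ne _ (ne_of_gt hij)

theorem mul_add_mul_eq_of_commuting {A : Type*} [Ring A] (f : A →+ A)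
    (hf : ∀ x, f x * x = x * f x) (x y : A) : f x * y + f y * x = x * f y + y * f x := by
  have h := hf (x + y)
  simp only [map_add, add_mul, mul_add] at h
  rw [hf x, hf y] at h
  linear_combination (norm := abel) h

namespace Matrix

variable {m α : Type*} [Fintype m] [DecidableEq m] [NonAssocSemiring α]

theorem mul_single_one_apply (M : Matrix m m α) (k l s t : m) :
    (M * single k l (1 : α)) s t = if t = l then M s k else 0 := by
  simp [mul_apply, single_apply, ite_and, eq_comm]

theorem single_one_mul_apply (M : Matrix m m α) (k l s t : m) :
    (single k l (1 : α) * M) s t = if s = k then M l t else 0 := by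
  simp [mul_apply, single_apply, ite_and, eq_comm]

end Matrix

namespace TriAlg

variable {R : Type*} [CommRing R] {n : ℕ}

def single (i j : Fin n) (h : i ≤ j) : TriAlg n R :=
  ⟨Matrix.single i j 1, fun _ _ hts => Matrix.single_apply_of_ne _ _ _ _ _
    fun ⟨hi, hj⟩ => (hi ▸ hj ▸ hts).not_ge h⟩

@[simp]
theorem coe_single (i j : Fin n) (h : i ≤ j) :
    ((single i j h : TriAlg n R) : Matrix (Fin n) (Fin n) R) = Matrix.single i j 1 := rfl

theorem mem_of_forall_single_mem {p : Submodule R (TriAlg n R)}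
    (hp : ∀ i j (h : i ≤ j), single i j h ∈ p) (x : TriAlg n R) : x ∈ p := by
  let e (i j : Fin n) : TriAlg n R := if h : i ≤ j then single i j h else 0
  have he (i j : Fin n) : ((x.val i j • e i j : TriAlg n R) : Matrix (Fin n) (Fin n) R) =
      Matrix.single i j (x.val i j) := by
    by_cases h : i ≤ j
    · simp [e, h]
    · simp [e, h, x.2 i j (not_le.mp h)]
  have hx : x = ∑ i, ∑ j, x.val i j • e i j := by
    ext1
    simp only [AddSubmonoidClass.coe_finsetSum, he]
    exact Matrix.matrix_eq_sum_single _
  rw [hx]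
  refine Submodule.sum_mem _ fun i _ => Submodule.sum_mem _ fun j _ => Submodule.smul_mem _ _ ?_
  by_cases h : i ≤ j
  · simpa [e, h] using hp i j h
  · simp [e, h]

def unitImage (θ : TriAlg n R →ₗ[R] TriAlg n R) (i j : Fin n) (h : i ≤ j) :
    Matrix (Fin n) (Fin n) R :=
  θ (single i j h)

section Commuting

variable {θ : TriAlg n R →ₗ[R] TriAlg n R} (hθ : ∀ x, θ x * x = x * θ x)
include hθ

theorem unitImage_comm {i j : Fin n} (hij : i ≤ j) (s t : Fin n) :
    (if t = j then unitImage θ i j hij s i else 0) =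
      if s = i then unitImage θ i j hij j t else 0 := by
  simpa [unitImage, Matrix.mul_single_one_apply, Matrix.single_one_mul_apply] using
    congrArg (fun x : TriAlg n R => x.val s t) (hθ (single i j hij))

theorem unitImage_linearized {i j k l : Fin n} (hij : i ≤ j) (hkl : k ≤ l) (s t : Fin n) :
    (if t = l then unitImage θ i j hij s k else 0) +
        (if t = j then unitImage θ k l hkl s i else 0) =
      (if s = i then unitImage θ k l hkl j t else 0) +
        if s = k then unitImage θ i j hij l t else 0 := by
  simpa [unitImage, Matrix.mul_single_one_apply, Matrix.single_one_mul_apply] using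
    congrArg (fun x : TriAlg n R => x.val s t)
      (mul_add_mul_eq_of_commuting θ.toAddMonoidHom hθ (single i j hij) (single k l hkl))

theorem unitImage_apply_self_left {k t : Fin n} (ht : t ≠ k) :
    unitImage θ k k le_rfl k t = 0 := by
  simpa [ht] using (unitImage_comm hθ (le_refl k) k t).symm

theorem unitImage_apply_self_right {k s : Fin n} (hs : s ≠ k) :
    unitImage θ k k le_rfl s k = 0 := by
  simpa [hs] using unitImage_comm hθ (le_refl k) s k

theorem unitImage_apply_of_ne {i j s t : Fin n} (hij : i ≤ j) (hst : s ≠ t)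
    (h : ¬(s = i ∧ t = j)) : unitImage θ i j hij s t = 0 := by
  by_cases htj : t = j
  · subst htj
    have hsi : s ≠ i := fun hsi => h ⟨hsi, rfl⟩
    simpa [hst.symm, hsi, unitImage_apply_self_left hθ (Ne.symm hsi)] using
      (unitImage_linearized hθ hij (le_refl s) s t).symm
  · have := unitImage_linearized hθ hij (le_refl t) s t
    by_cases hsi : s = i
    · subst hsi
      simpa [hst, htj, unitImage_apply_self_right hθ (Ne.symm htj)] using this
    · simpa [hst, htj, hsi] using this

theorem unitImage_self_apply_diag_eq {k p q : Fin n} (hp : p ≠ k) (hq : q ≠ k) :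
    unitImage θ k k le_rfl p p = unitImage θ k k le_rfl q q := by
  wlog hpq : p ≤ q generalizing p q
  · exact (this hq hp (le_of_not_ge hpq)).symm
  simpa [hp, hq] using unitImage_linearized hθ (le_refl k) hpq p q

theorem unitImage_apply_diag_eq {i j : Fin n} (hij : i < j) (p q : Fin n) :
    unitImage θ i j hij.le p p = unitImage θ i j hij.le q q := by
  wlog hpq : p ≤ q generalizing p q
  · exact (this q p (le_of_not_ge hpq)).symm
  have h := unitImage_linearized hθ hij.le hpq p q
  by_cases hp : p = i <;> by_cases hq : q = j
  · subst hp hq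
    simpa using unitImage_comm hθ hij.le p q
  · subst hp
    simpa [hq, unitImage_apply_of_ne hθ hpq (Ne.symm hq) (fun h => hij.ne h.1.symm)] using h
  · subst hq
    simpa [hp, unitImage_apply_of_ne hθ hpq hp (fun h => hij.ne h.2)] using h
  · simpa [hp, hq] using h

theorem unitImage_apply_eq_sub_left {i j : Fin n} (hij : i < j) :
    unitImage θ i j hij.le i j = unitImage θ i i le_rfl i i - unitImage θ i i le_rfl j j := by
  have h := unitImage_linearized hθ hij.le (le_refl i) i j
  simp only [hij.ne', ↓reduceIte, zero_add] at h
  linear_combination -h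

theorem unitImage_apply_eq_sub_right {i j : Fin n} (hij : i < j) :
    unitImage θ i j hij.le i j = unitImage θ j j le_rfl j j - unitImage θ j j le_rfl i i := by
  have h := unitImage_linearized hθ hij.le (le_refl j) i j
  simp only [↓reduceIte, hij.ne, add_zero] at h
  linear_combination h

theorem unitImage_self_sub_comm {i j : Fin n} (hij : i ≠ j) :
    unitImage θ i i le_rfl i i - unitImage θ i i le_rfl j j =
      unitImage θ j j le_rfl j j - unitImage θ j j le_rfl i i := by
  rcases hij.lt_or_gt with h | h <;>
    rw [← unitImage_apply_eq_sub_left hθ h, unitImage_apply_eq_sub_right hθ h]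

theorem exists_unitImage_self_sub_eq : ∃ l : R, ∀ k p : Fin n, p ≠ k →
    unitImage θ k k le_rfl k k - unitImage θ k k le_rfl p p = l := by
  by_cases h : ∃ k₀ p₀ : Fin n, p₀ ≠ k₀
  · obtain ⟨k₀, p₀, h₀⟩ := h
    refine ⟨unitImage θ k₀ k₀ le_rfl k₀ k₀ - unitImage θ k₀ k₀ le_rfl p₀ p₀, fun k p hp => ?_⟩
    rcases eq_or_ne k k₀ with rfl | hk
    · rw [unitImage_self_apply_diag_eq hθ hp h₀]
    · rw [unitImage_self_apply_diag_eq hθ hp hk.symm, ← unitImage_self_sub_comm hθ hk.symm,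
        unitImage_self_apply_diag_eq hθ hk h₀]
  · exact ⟨0, fun k p hp => (h ⟨k, p, hp⟩).elim⟩

section

variable {l : R}
  (hl : ∀ k p : Fin n, p ≠ k → unitImage θ k k le_rfl k k - unitImage θ k k le_rfl p p = l)
include hl

theorem map_single_of_lt {i j : Fin n} (hij : i < j) :
    θ (single i j hij.le) =
      l • single i j hij.le + algebraMap R _ (unitImage θ i j hij.le j j) := by
  ext s t
  change unitImage θ i j hij.le s t = _
  simp only [SetLike.val_smul, coe_single, Subalgebra.coe_add, Subalgebra.coe_algebraMap,
    Matrix.add_apply, Matrix.smul_apply, Matrix.single_apply, Matrix.algebraMap_matrix_apply]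
  by_cases h : s = i ∧ t = j
  · obtain ⟨rfl, rfl⟩ := h
    simp [hij.ne, unitImage_apply_eq_sub_left hθ hij, hl s t hij.ne']
  · rw [if_neg fun h' => h ⟨h'.1.symm, h'.2.symm⟩, smul_zero, zero_add]
    by_cases hst : s = t
    · subst hst
      simp [unitImage_apply_diag_eq hθ hij s j]
    · simp [hst, unitImage_apply_of_ne hθ hij.le hst h]

theorem map_single_self (k : Fin n) :
    θ (single k k le_rfl) =
      l • single k k le_rfl + algebraMap R _ (unitImage θ k k le_rfl k k - l) := by
  ext s t
  change unitImage θ k k le_rfl s t = _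
  simp only [SetLike.val_smul, coe_single, Subalgebra.coe_add, Subalgebra.coe_algebraMap,
    Matrix.add_apply, Matrix.smul_apply, Matrix.single_apply, Matrix.algebraMap_matrix_apply]
  by_cases hst : s = t
  · subst hst
    by_cases hs : s = k
    · subst hs; simp
    · simp [Ne.symm hs, ← hl k s hs]
  · have h : ¬(s = k ∧ t = k) := fun h => hst (h.1.trans h.2.symm)
    rw [if_neg fun h' => h ⟨h'.1.symm, h'.2.symm⟩, smul_zero, zero_add, if_neg hst,
      unitImage_apply_of_ne hθ le_rfl hst h]

end

theorem exists_map_single_eq : ∃ l : R, ∀ i j (h : i ≤ j), ∃ c : R,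
    θ (single i j h) = l • single i j h + algebraMap R _ c := by
  obtain ⟨l, hl⟩ := exists_unitImage_self_sub_eq hθ
  refine ⟨l, fun i j h => ?_⟩
  rcases h.lt_or_eq with hij | rfl
  · exact ⟨_, map_single_of_lt hθ hl hij⟩
  · exact ⟨_, map_single_self hθ hl i⟩

end Commuting

end TriAlg

theorem triangular_commuting_proper_general {R : Type*} [CommRing R] (n : ℕ)
    (θ : TriAlg n R →ₗ[R] TriAlg n R) (hθ : ∀ x, θ x * x = x * θ x) :
    ∃ l ∈ Set.center (TriAlg n R), ∃ μ : TriAlg n R →ₗ[R] TriAlg n R,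
      (∀ x, μ x ∈ Set.center (TriAlg n R)) ∧ ∀ x, θ x = l * x + μ x := by
  obtain ⟨l, hl⟩ := TriAlg.exists_map_single_eq hθ
  refine ⟨algebraMap R _ l, Set.algebraMap_mem_center l, θ - l • LinearMap.id, fun x => ?_,
    fun x => by simp [Algebra.smul_def]⟩
  refine TriAlg.mem_of_forall_single_mem (fun i j h => ?_) x
    (p := (Subalgebra.center R _).toSubmodule.comap (θ - l • LinearMap.id))
  obtain ⟨c, hc⟩ := hl i j h
  simp [hc]

/-- every commuting map on `Tₙ(R)`, `R` `2`-torsion free with unity, `n ≥ 1`,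
is proper. -/
theorem triangular_commuting_proper {R : Type*} [CommRing R]
    (htf : ∀ a : R, a + a = 0 → a = 0) (n : ℕ) (hn : 1 ≤ n)
    (θ : TriAlg n R →ₗ[R] TriAlg n R) (hθ : ∀ x, θ x * x = x * θ x) :
    ∃ l ∈ Set.center (TriAlg n R), ∃ μ : TriAlg n R →ₗ[R] TriAlg n R,
      (∀ x, μ x ∈ Set.center (TriAlg n R)) ∧ ∀ x, θ x = l * x + μ x :=
  triangular_commuting_proper_general n θ hθ
end

section
/- Let R be a nontrivial commutative ring (with 1 ≠ 0). The commuting map θ on the algebra A of the previous statement (matrices with possibly nonzero entries (1,1),(2,2),(3,3),(1,3),(2,3), θ(a) having diagonal (a(1,1), a(3,3), a(3,3)) and (1,3)-entry a(1,3)) is improper: there do not exist a central element λ of A and an R-linear map μ : A → Z(A) with θ(x) = λ*x + μ(x) for all x ∈ A. -/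
/-- The incidence algebra of the poset `1 ← 3 → 2` realized inside `M₃(R)`:
matrices supported on positions `(0,0), (1,1), (2,2), (0,2), (1,2)` (`0`-based). -/
def ExAlg (R : Type*) [CommRing R] : Subalgebra R (Matrix (Fin 3) (Fin 3) R) where
  carrier := {a | a 0 1 = 0 ∧ a 1 0 = 0 ∧ a 2 0 = 0 ∧ a 2 1 = 0}
  mul_mem' := by
    rintro a b ⟨ha1, ha2, ha3, ha4⟩ ⟨hb1, hb2, hb3, hb4⟩
    refine ⟨?_, ?_, ?_, ?_⟩ <;>
      simp [Matrix.mul_apply, Fin.sum_univ_three, ha1, ha2, ha3, ha4, hb1, hb2, hb3, hb4]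
  add_mem' := by
    rintro a b ⟨ha1, ha2, ha3, ha4⟩ ⟨hb1, hb2, hb3, hb4⟩
    refine ⟨?_, ?_, ?_, ?_⟩ <;> simp [Matrix.add_apply, *]
  algebraMap_mem' := by
    intro r
    refine ⟨?_, ?_, ?_, ?_⟩ <;>
      simp [Matrix.algebraMap_eq_diagonal, Matrix.diagonal_apply_ne]

/-- The map `θ` sending `a` to the matrix with diagonal `(a₁₁, a₃₃, a₃₃)` and
`(1,3)`-entry `a₁₃` (here `0`-based: diagonal `(a 0 0, a 2 2, a 2 2)`, entry `(0,2)`). -/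
def thetaMat {R : Type*} [CommRing R] (a : Matrix (Fin 3) (Fin 3) R) :
    Matrix (Fin 3) (Fin 3) R :=
  Matrix.of ![![a 0 0, 0, a 0 2], ![0, a 2 2, 0], ![0, 0, a 2 2]]

theorem thetaMat_mem {R : Type*} [CommRing R] (a : Matrix (Fin 3) (Fin 3) R) :
    thetaMat a ∈ ExAlg R := by
  refine ⟨rfl, rfl, rfl, rfl⟩

/-- `θ` as an `R`-linear map on the algebra `ExAlg R`. -/
def theta (R : Type*) [CommRing R] : ExAlg R →ₗ[R] ExAlg R where
  toFun a := ⟨thetaMat a.1, thetaMat_mem a.1⟩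
  map_add' a b := by
    ext i j
    fin_cases i <;> fin_cases j <;> simp [thetaMat]
  map_smul' r a := by
    ext i j
    fin_cases i <;> fin_cases j <;> simp [thetaMat]

/-!
A central element of `ExAlg R` commutes with the matrix units `E₀₀, E₁₁, E₂₂, E₀₂, E₁₂`
of the algebra, which forces it to be a scalar matrix. Hence `λ = c • 1` and every `μ x` is
scalar. At `E₁₂`, where `θ` vanishes, the `(1,2)` entry gives `c = 0`; so `θ(E₀₀) = E₀₀`
would have to be scalar, i.e. `1 = 0`.
-/

local notation "M₃" => Matrix (Fin 3) (Fin 3)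

namespace ExAlg

variable {R : Type*} [CommRing R]

theorem single_mem {i j : Fin 3} (hij : i = j ∨ j = 2) :
    Matrix.single i j (1 : R) ∈ ExAlg R := by
  refine ⟨?_, ?_, ?_, ?_⟩ <;> rcases hij with rfl | rfl <;> simp [Matrix.single_apply] <;> omega

def single (i j : Fin 3) (hij : i = j ∨ j = 2) : ExAlg R :=
  ⟨Matrix.single i j 1, single_mem hij⟩

@[simp]
theorem coe_single (i j : Fin 3) (hij : i = j ∨ j = 2) :
    ((single i j hij : ExAlg R) : M₃ R) = Matrix.single i j 1 :=
  rfl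

theorem commute_single_of_mem_center {z : ExAlg R} (hz : z ∈ Set.center (ExAlg R))
    {i j : Fin 3} (hij : i = j ∨ j = 2) : Commute (Matrix.single i j 1) (z : M₃ R) :=
  congrArg Subtype.val (hz.comm (single i j hij)).symm

theorem mem_range_scalar_of_mem_center {z : ExAlg R} (hz : z ∈ Set.center (ExAlg R)) :
    (z : M₃ R) ∈ Set.range (Matrix.scalar (Fin 3)) := by
  have off_diag {j k : Fin 3} (hjk : k ≠ j) : (z : M₃ R) j k = 0 :=
    Matrix.row_eq_zero_of_commute_single (commute_single_of_mem_center hz (.inl rfl)) hjk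
  have diag {i : Fin 3} : (z : M₃ R) i i = (z : M₃ R) 2 2 :=
    Matrix.diag_eq_of_commute_single (commute_single_of_mem_center hz (.inr rfl))
  refine ⟨(z : M₃ R) 2 2, Matrix.ext fun j k => ?_⟩
  fin_cases j <;> fin_cases k <;> simp [diag, off_diag]

end ExAlg

/-- the commuting map `θ` on `ExAlg R` is improper for nontrivial `R`:
there are no central `λ` and `R`-linear central-valued `μ` with `θ(x) = λ*x + μ(x)`. -/
theorem theta_improper (R : Type*) [CommRing R] [Nontrivial R] :
    ¬ ∃ l ∈ Set.center (ExAlg R), ∃ μ : ExAlg R →ₗ[R] ExAlg R,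
        (∀ x, μ x ∈ Set.center (ExAlg R)) ∧ ∀ x, theta R x = l * x + μ x := by
  rintro ⟨l, hl, μ, hμ, h⟩
  obtain ⟨c, hc⟩ := ExAlg.mem_range_scalar_of_mem_center hl
  have entry (x : ExAlg R) (i j : Fin 3) :
      thetaMat (x : M₃ R) i j = c * (x : M₃ R) i j + (μ x : M₃ R) i j := by
    simpa [theta, ← hc] using congrArg (fun y : ExAlg R => (y : M₃ R) i j) (h x)
  obtain ⟨d, hd⟩ := ExAlg.mem_range_scalar_of_mem_center (hμ (ExAlg.single 1 2 (.inr rfl)))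
  obtain ⟨e, he⟩ := ExAlg.mem_range_scalar_of_mem_center (hμ (ExAlg.single 0 0 (.inl rfl)))
  have hc0 : 0 = c := by simpa [thetaMat, ← hd] using entry (ExAlg.single 1 2 (.inr rfl)) 1 2
  have he1 : 1 = e := by
    simpa [thetaMat, ← he, ← hc0] using entry (ExAlg.single 0 0 (.inl rfl)) 0 0
  have he0 : 0 = e := by simpa [thetaMat, ← he] using entry (ExAlg.single 0 0 (.inl rfl)) 1 1
  exact one_ne_zero (he1.trans he0.symm)
end

section
/- Let X be a finite preordered set, R a commutative ring, and θ a commuting map on the incidence algebra I(X,R). Then for each i ∈ X, θ(e_{ii}) is a diagonal element: θ(e_{ii}) = Σ_{x∈X} C_x e_{xx} for some coefficients C_x ∈ R; i.e., θ(e_{ii})(x,y) = 0 whenever x ≠ y. -/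
variable {X R : Type*} [Preorder X] [LocallyFiniteOrder X] [DecidableEq X] [CommRing R]

/-- Membership in the incidence algebra `I(X,R)`: supported on pairs `x ≤ y`. -/
def IsInc (f : X → X → R) : Prop := ∀ x y : X, ¬ x ≤ y → f x y = 0

/-- The convolution product of the incidence algebra. -/
def conv (f g : X → X → R) : X → X → R :=
  fun x y => ∑ z ∈ Finset.Icc x y, f x z * g z y

/-- The matrix unit `e_{ij}` of the incidence algebra. -/
def eunit (i j : X) : X → X → R := fun x y => if x = i ∧ y = j then 1 else 0

/-- A commuting map on the incidence algebra: an `R`-linear map `θ : I(X,R) → I(X,R)`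
with `[θ(f), f] = 0` for all `f`. -/
structure IsCommMap (θ : (X → X → R) → X → X → R) : Prop where
  map_inc : ∀ f, IsInc f → IsInc (θ f)
  map_add : ∀ f g, IsInc f → IsInc g → θ (f + g) = θ f + θ g
  map_smul : ∀ (r : R) (f), IsInc f → θ (r • f) = r • θ f
  comm : ∀ f, IsInc f → conv (θ f) f = conv f (θ f)

lemma conv_eunit_self_apply (f : X → X → R) (j : X) {x y : X} (h : x ≤ y) :
    conv f (eunit j j) x y = if y = j then f x y else 0 := by
  split_ifs with hy
  · subst hy
    simp [conv, eunit, h]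
  · simp [conv, eunit, hy]

lemma eunit_self_conv_apply (f : X → X → R) (j : X) {x y : X} (h : x ≤ y) :
    conv (eunit j j) f x y = if x = j then f x y else 0 := by
  split_ifs with hx
  · subst hx
    simp [conv, eunit, h]
  · simp [conv, eunit, hx]

lemma apply_eq_zero_of_conv_eunit_comm {a : X → X → R} {i : X}
    (ha : conv a (eunit i i) = conv (eunit i i) a) {x y : X} (hle : x ≤ y) (hne : x ≠ y)
    (hi : x = i ∨ y = i) : a x y = 0 := by
  have h := congrFun (congrFun ha x) y
  rw [conv_eunit_self_apply a i hle, eunit_self_conv_apply a i hle] at h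
  rcases hi with rfl | rfl
  · simpa [Ne.symm hne] using h.symm
  · simpa [hne] using h

/-- Linearization of `[θ f, f] = 0`, obtained by expanding `[θ (f + g), f + g] = 0`. -/
lemma IsCommMap.conv_add_conv_comm {Y S : Type*} [Preorder Y] [LocallyFiniteOrder Y] [CommRing S]
    {θ : (Y → Y → S) → Y → Y → S} (hθ : IsCommMap θ) {f g : Y → Y → S} (hf : IsInc f)
    (hg : IsInc g) :
    conv (θ f) g + conv (θ g) f = conv f (θ g) + conv g (θ f) := by
  have hfg : IsInc (f + g) := fun x y h => by simp [hf x y h, hg x y h]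
  have h := hθ.comm (f + g) hfg
  rw [hθ.map_add f g hf hg] at h
  funext x y
  have hsum := congrFun (congrFun h x) y
  have hff := congrFun (congrFun (hθ.comm f hf) x) y
  have hgg := congrFun (congrFun (hθ.comm g hg) x) y
  simp only [conv, Pi.add_apply, add_mul, mul_add, Finset.sum_add_distrib] at hsum hff hgg ⊢
  linear_combination hsum - hff - hgg

theorem theta_eii_diagonal_general
    (θ : (X → X → R) → X → X → R) (hθ : IsCommMap θ) :
    ∀ i x y : X, x ≠ y → θ (eunit i i) x y = 0 := by
  intro i x y hne
  have isInc_eunit (j : X) : IsInc (eunit j j : X → X → R) := fun a b hab => by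
    simp only [eunit, ite_eq_right_iff]
    rintro ⟨rfl, rfl⟩
    exact absurd le_rfl hab
  by_cases hle : x ≤ y
  swap
  · exact hθ.map_inc _ (isInc_eunit i) x y hle
  by_cases hxy_i : x = i ∨ y = i
  · exact apply_eq_zero_of_conv_eunit_comm (hθ.comm _ (isInc_eunit i)) hle hne hxy_i
  -- Off the `i`-th row and column, read off the `(x, y)` entry of `[θ e_{ii}, e_{yy}] = [e_{ii}, θ e_{yy}]`.
  push Not at hxy_i
  have h := congrFun (congrFun (hθ.conv_add_conv_comm (isInc_eunit i) (isInc_eunit y)) x) y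
  simp only [Pi.add_apply, conv_eunit_self_apply _ _ hle, eunit_self_conv_apply _ _ hle] at h
  simpa [hxy_i.1, hxy_i.2, hne] using h

/-- for `X` a finite preordered set, a commuting map `θ` on `I(X,R)` sends
each idempotent `e_{ii}` to a diagonal element: `θ(e_{ii})(x,y) = 0` whenever `x ≠ y`. -/
theorem theta_eii_diagonal [Finite X]
    (θ : (X → X → R) → X → X → R) (hθ : IsCommMap θ) :
    ∀ i x y : X, x ≠ y → θ (eunit i i) x y = 0 :=
  theta_eii_diagonal_general θ hθ
end

section
/- Let X be a finite preordered set, R a commutative ring, and θ a commuting map on the incidence algebra I(X,R). Then for i < j (i.e. i ≤ j and i ≠ j), θ(e_{ij})(x,y) = 0 for all x < y with (x,y) ≠ (i,j); that is, θ(e_{ij}) is a sum of a diagonal element and a scalar multiple of e_{ij}. -/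
variable {X R : Type*} [Preorder X] [LocallyFiniteOrder X] [DecidableEq X] [CommRing R]

/-! Linearizing `[θ f, f] = 0` gives `θ(f) g + θ(g) f = g θ(f) + f θ(g)`. Taking `f = e_ij` and
`g = e_yy` (or `g = e_xx` when `y = j`) and evaluating at `(x, y)` isolates `θ(e_ij)(x, y)`; the only
other surviving term is an off-diagonal entry in the row or column `a` of `θ(e_aa)`, and those vanish
because `θ(e_aa)` commutes with `e_aa`. -/

set_option linter.unusedSectionVars false

lemma isInc_eunit {i j : X} (h : i ≤ j) : IsInc (eunit i j : X → X → R) := by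
  rintro x y hxy
  simp only [eunit, ite_eq_right_iff, and_imp]
  rintro rfl rfl
  exact absurd h hxy

lemma IsInc.add {f g : X → X → R} (hf : IsInc f) (hg : IsInc g) : IsInc (f + g) := by
  intro x y h
  simp [hf x y h, hg x y h]

lemma conv_add_left (f g h : X → X → R) : conv (f + g) h = conv f h + conv g h := by
  ext x y
  simp [conv, add_mul, Finset.sum_add_distrib]

lemma conv_add_right (f g h : X → X → R) : conv f (g + h) = conv f g + conv f h := by
  ext x y
  simp [conv, mul_add, Finset.sum_add_distrib]

lemma conv_eunit_right (f : X → X → R) (i j x y : X) :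
    conv f (eunit i j) x y = if y = j ∧ i ∈ Finset.Icc x y then f x i else 0 := by
  simp only [conv, eunit, mul_ite, mul_one, mul_zero, ite_and, Finset.sum_ite_eq']
  split_ifs <;> rfl

lemma conv_eunit_left (f : X → X → R) (i j x y : X) :
    conv (eunit i j) f x y = if x = i ∧ j ∈ Finset.Icc x y then f j y else 0 := by
  simp only [conv, eunit, ite_mul, one_mul, zero_mul, ite_and, Finset.sum_ite_irrel,
    Finset.sum_ite_eq', Finset.sum_const_zero]

namespace IsCommMap

variable {θ : (X → X → R) → X → X → R}

lemma conv_add_conv_eq (hθ : IsCommMap θ) {f g : X → X → R} (hf : IsInc f) (hg : IsInc g) :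
    conv (θ f) g + conv (θ g) f = conv g (θ f) + conv f (θ g) := by
  have hfg := hθ.comm (f + g) (hf.add hg)
  rw [hθ.map_add f g hf hg] at hfg
  simp only [conv_add_left, conv_add_right] at hfg
  linear_combination hfg - hθ.comm f hf - hθ.comm g hg

lemma apply_eunit_self_of_ne_left (hθ : IsCommMap θ) {a u : X} (hua : u ≠ a) :
    θ (eunit a a) u a = 0 := by
  by_cases hle : u ≤ a
  · have h := congrFun₂ (hθ.comm (eunit a a) (isInc_eunit le_rfl)) u a
    simpa [conv_eunit_right, conv_eunit_left, hle, hua] using h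
  · exact hθ.map_inc _ (isInc_eunit le_rfl) u a hle

lemma apply_eunit_self_of_ne_right (hθ : IsCommMap θ) {a v : X} (hav : a ≠ v) :
    θ (eunit a a) a v = 0 := by
  by_cases hle : a ≤ v
  · have h := congrFun₂ (hθ.comm (eunit a a) (isInc_eunit le_rfl)) a v
    simpa [conv_eunit_right, conv_eunit_left, hle, hav.symm] using h.symm
  · exact hθ.map_inc _ (isInc_eunit le_rfl) a v hle

end IsCommMap

theorem theta_eij_form_general
    (θ : (X → X → R) → X → X → R) (hθ : IsCommMap θ) :
    ∀ i j : X, i ≤ j → i ≠ j →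
      ∀ x y : X, x ≤ y → x ≠ y → (x, y) ≠ (i, j) → θ (eunit i j) x y = 0 := by
  intro i j hij _ x y hxy hxy_ne hne
  by_cases hyj : y = j
  · subst hyj
    have hxi : x ≠ i := fun h => hne (by rw [h])
    have h := congrFun₂ (hθ.conv_add_conv_eq (isInc_eunit hij) (isInc_eunit (le_refl x))) x y
    simpa [conv_eunit_right, conv_eunit_left, hxy, hxy_ne.symm, hxi,
      hθ.apply_eunit_self_of_ne_right hxi] using h.symm
  · have h := congrFun₂ (hθ.conv_add_conv_eq (isInc_eunit hij) (isInc_eunit (le_refl y))) x y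
    simpa [conv_eunit_right, conv_eunit_left, hxy, hxy_ne, hyj,
      hθ.apply_eunit_self_of_ne_left (Ne.symm hyj)] using h

/-- for `i < j`, `θ(e_{ij})` is diagonal plus a multiple of `e_{ij}`:
`θ(e_{ij})(x,y) = 0` for all `x < y` with `(x,y) ≠ (i,j)`. -/
theorem theta_eij_form [Finite X]
    (θ : (X → X → R) → X → X → R) (hθ : IsCommMap θ) :
    ∀ i j : X, i ≤ j → i ≠ j →
      ∀ x y : X, x ≤ y → x ≠ y → (x, y) ≠ (i, j) → θ (eunit i j) x y = 0 :=
  theta_eij_form_general θ hθ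
end
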